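/- Fix r > 0 and let p be a log-Hölder continuous function on B_n. Then there exist constants c, C > 0 (depending on r, n, and the log-Hölder constant of p) such that c·(1−|a|²)^{p(w)} ≤ (1−|a|²)^{p(z)} ≤ C·(1−|a|²)^{p(w)} for all a ∈ B_n and all z, w in the Bergman metric ball B(a,r). -/

import Mathlib

open MeasureTheory Metric Set Filter Finset
open scoped ENNReal Topology

noncomputable section

/-- `En n` is `ℂⁿ` with the Euclidean norm. -/
abbrev En (n : ℕ) := EuclideanSpace ℂ (Fin n)

instance (n : ℕ) : MeasurableSpace (En n) := borel _
instance (n : ℕ) : BorelSpace (En n) := ⟨rfl⟩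

/-- The open unit ball `𝔹ₙ ⊂ ℂⁿ`. -/
def Cball (n : ℕ) : Set (En n) := Metric.ball 0 1

/-- The paper's pairing `⟨z,w⟩ = ∑ zᵢ conj wᵢ` (Mathlib's `inner w z`). -/
def pin {n : ℕ} (z w : En n) : ℂ := @inner ℂ _ _ w z

open scoped Classical in
/-- Orthogonal projection of `w` onto the complex line spanned by `z` (zero if `z = 0`). -/
def Pzproj {n : ℕ} (z w : En n) : En n :=
  if z = 0 then 0 else ((pin w z) / (pin z z)) • z

/-- The involutive automorphism `σ_z` of the ball exchanging `0` and `z`. -/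
def sigmaInv {n : ℕ} (z w : En n) : En n :=
  ((1 : ℂ) / (1 - pin w z)) •
    ((z - Pzproj z w) + ((Real.sqrt (1 - ‖z‖ ^ 2) : ℝ) : ℂ) • (Pzproj z w - w))

/-- The pseudo-hyperbolic distance `d(z,w) = |σ_z(w)|`. -/
def phd {n : ℕ} (z w : En n) : ℝ := ‖sigmaInv z w‖

/-- The Bergman metric `β(z,w)`. -/
def bmet {n : ℕ} (z w : En n) : ℝ :=
  (1 / 2) * Real.log ((1 + phd z w) / (1 - phd z w))

/-- The Bergman metric ball `B(a,r)`. -/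
def Bball {n : ℕ} (a : En n) (r : ℝ) : Set (En n) :=
  {w | w ∈ Cball n ∧ bmet a w < r}

/-- The pseudo-hyperbolic ball `E(z,s)`. -/
def Eball {n : ℕ} (z : En n) (s : ℝ) : Set (En n) :=
  {w | w ∈ Cball n ∧ phd z w < s}

/-- The normalized Lebesgue measure `V` on `ℂⁿ`, with `V(𝔹ₙ) = 1`. -/
def Vm (n : ℕ) : Measure (En n) :=
  ((Measure.addHaar : Measure (En n)) (Cball n))⁻¹ • (Measure.addHaar : Measure (En n))

/-- The modular `ρ_{p(·),μ}(f) = ∫_{𝔹ₙ} |f|^{p(z)} dμ(z)` (as an extended real). -/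
def modular {n : ℕ} (p : En n → ℝ) (μ : Measure (En n)) (f : En n → ℂ) : ℝ≥0∞ :=
  ∫⁻ z in Cball n, (‖f z‖₊ : ℝ≥0∞) ^ (p z) ∂μ

/-- The Luxemburg–Nakano norm `‖f‖_{p(·),μ}` (as an extended real). -/
def luxNorm {n : ℕ} (p : En n → ℝ) (μ : Measure (En n)) (f : En n → ℂ) : ℝ≥0∞ :=
  sInf {γ : ℝ≥0∞ | γ ≠ 0 ∧ ∫⁻ z in Cball n, ((‖f z‖₊ : ℝ≥0∞) / γ) ^ (p z) ∂μ ≤ 1}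

/-- `p` is log-Hölder continuous on the ball. -/
def LogHolder {n : ℕ} (p : En n → ℝ) : Prop :=
  ∃ C > (0 : ℝ), ∀ z ∈ Cball n, ∀ w ∈ Cball n, dist z w < 1 / 2 →
    |p z - p w| ≤ C / Real.log (1 / dist z w)

/-- `p ∈ 𝒫^{log}(𝔹ₙ)`: log-Hölder continuous with `1 < p⁻ ≤ p⁺ < ∞`. -/
def Plog {n : ℕ} (p : En n → ℝ) : Prop :=
  LogHolder p ∧ (∃ m : ℝ, 1 < m ∧ ∀ z ∈ Cball n, m ≤ p z) ∧
    (∃ M : ℝ, ∀ z ∈ Cball n, p z ≤ M)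

/-- Membership in the variable exponent Bergman space `A^{p(·)}(𝔹ₙ)`. -/
def memA {n : ℕ} (p : En n → ℝ) (f : En n → ℂ) : Prop :=
  DifferentiableOn ℂ f (Cball n) ∧ modular p (Vm n) f < ⊤

/-- The Toeplitz operator `T_μ^β`. -/
def Toep {n : ℕ} (μ : Measure (En n)) (β : ℝ) (f : En n → ℂ) : En n → ℂ :=
  fun z => ∫ w in Cball n, f w / (1 - pin z w) ^ (((n : ℝ) + 1 + β : ℂ)) ∂μ

/-- The weighted composition operator `C_{u,φ}`. -/
def wco {n : ℕ} (u : En n → ℂ) (φ : En n → En n) (f : En n → ℂ) : En n → ℂ :=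
  fun z => u z * f (φ z)

/-- The weight `ω_φ(z) = (1-|φ(z)|²)^{-(n+1)(p(z)-p(φ(z)))/p(φ(z))}`. -/
def omegaW {n : ℕ} (p : En n → ℝ) (φ : En n → En n) (z : En n) : ℝ :=
  (1 - ‖φ z‖ ^ 2) ^ (-(((n : ℝ) + 1) * (p z - p (φ z)) / p (φ z)))

/-- A bounded linear operator on `A^{p(·)}(𝔹ₙ)`. -/
def BoundedOnA {n : ℕ} (p : En n → ℝ) (T : (En n → ℂ) → (En n → ℂ)) : Prop :=
  ∃ C > (0 : ℝ), ∀ f : En n → ℂ, memA p f →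
    luxNorm p (Vm n) (T f) ≤ ENNReal.ofReal C * luxNorm p (Vm n) f

/-- Compactness of an operator on `A^{p(·)}(𝔹ₙ)`, via the sequential criterion:
`‖T f_j‖_{p(·)} → 0` for every norm-bounded sequence in `A^{p(·)}` converging to `0`
uniformly on compact subsets of the ball. -/
def CompactOnA {n : ℕ} (p : En n → ℝ) (T : (En n → ℂ) → (En n → ℂ)) : Prop :=
  ∀ f : ℕ → En n → ℂ, (∀ j, memA p (f j)) →
    (∃ Cb : ℝ, ∀ j, luxNorm p (Vm n) (f j) ≤ ENNReal.ofReal Cb) →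
    (∀ K ⊆ Cball n, IsCompact K → TendstoUniformlyOn f 0 atTop K) →
    Tendsto (fun j => luxNorm p (Vm n) (T (f j))) atTop (𝓝 0)


/-!
Log-Hölder continuity bounds `|p z - p w| · log (1 / |z - w|)` near the diagonal and, chaining
along segments of the convex ball, the total oscillation of `p`. The identity
`(1 - d(a,z)²) |1 - ⟨z,a⟩|² = (1 - |a|²)(1 - |z|²)` shows that points of `B(a,r)` satisfy
`|z - a|² ≲ 1 - |a|²`. Hence `|p z - p a| · |log (1 - |a|²)|` is bounded uniformly in `a`, and so is
`(1 - |a|²) ^ (p z - p w) = exp ((p z - p w) · log (1 - |a|²))`, from above and below.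
-/

theorem abs_sub_le_nat_mul_of_convex {E : Type*} [NormedAddCommGroup E] [NormedSpace ℝ E]
    {S : Set E} (hS : Convex ℝ S) {f : E → ℝ} {ε δ : ℝ}
    (hf : ∀ x ∈ S, ∀ y ∈ S, dist x y ≤ ε → |f x - f y| ≤ δ) (N : ℕ) :
    ∀ x ∈ S, ∀ y ∈ S, dist x y ≤ N * ε → |f x - f y| ≤ N * δ := by
  induction N with
  | zero =>
    intro x _ y _ hxy
    simp [dist_le_zero.mp (by simpa using hxy)]
  | succ N ih =>
    intro x hx y hy hxy
    set m : E := x + ((N : ℝ) / (N + 1)) • (y - x)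
    have hN : (0 : ℝ) < N + 1 := by positivity
    have hm : m ∈ S := by
      have := hS.add_smul_sub_mem hx hy (t := (N : ℝ) / (N + 1))
        ⟨by positivity, (div_le_one hN).mpr (by linarith)⟩
      simpa [m] using this
    have hxm : dist x m = N / (N + 1) * dist x y := by
      rw [dist_comm, dist_eq_norm, add_sub_cancel_left, norm_smul,
        Real.norm_of_nonneg (by positivity), dist_eq_norm']
    have hmy : dist m y = 1 / (N + 1) * dist x y := by
      have : y - m = (1 / ((N : ℝ) + 1)) • (y - x) := by
        rw [show (1 : ℝ) / (N + 1) = 1 - N / (N + 1) by field_simp; ring]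
        module
      rw [dist_comm, dist_eq_norm, this, norm_smul, Real.norm_of_nonneg (by positivity),
        dist_eq_norm']
    have h1 := ih x hx m hm (by
      rw [hxm]
      calc (N : ℝ) / (N + 1) * dist x y ≤ N / (N + 1) * ((N + 1) * ε) := by
            gcongr; exact_mod_cast hxy
        _ = N * ε := by field_simp)
    have h2 := hf m hm y hy (by
      rw [hmy]
      calc 1 / ((N : ℝ) + 1) * dist x y ≤ 1 / (N + 1) * ((N + 1) * ε) := by
            gcongr; exact_mod_cast hxy
        _ = ε := by field_simp)
    calc |f x - f y| ≤ |f x - f m| + |f m - f y| := abs_sub_le _ _ _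
      _ ≤ N * δ + δ := add_le_add h1 h2
      _ = (N + 1 : ℕ) * δ := by push_cast; ring

theorem abs_mul_abs_log_le_of_sq_le {Δ d t B C K : ℝ} (hK : 1 ≤ K) (ht0 : 0 < t) (ht1 : t ≤ 1)
    (hd0 : 0 ≤ d) (hdt : d ^ 2 ≤ K * t) (hB : |Δ| ≤ B) (hC : 0 ≤ C)
    (hΔ : d < 1 / 2 → |Δ| ≤ C / Real.log (1 / d)) :
    |Δ| * |Real.log t| ≤ B * Real.log (16 * K) + C * (2 + Real.log K) := by
  have hlogK : 0 ≤ Real.log K := Real.log_nonneg hK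
  have hlog16K : 0 ≤ Real.log (16 * K) := Real.log_nonneg (by linarith)
  have hBterm : 0 ≤ B * Real.log (16 * K) := mul_nonneg ((abs_nonneg _).trans hB) hlog16K
  have hCterm : 0 ≤ C * (2 + Real.log K) := by positivity
  rw [abs_of_nonpos (Real.log_nonpos ht0.le ht1)]
  by_cases hKt : K * t < 1 / 16
  · have hd : d < 1 / 4 := by nlinarith
    rcases hd0.eq_or_lt with rfl | hdpos
    · -- At `d = 0` the bound reads `|Δ| ≤ C / log (1 / 0) = 0`.
      have : |Δ| ≤ 0 := by simpa using hΔ (by norm_num)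
      rw [le_antisymm this (abs_nonneg Δ), zero_mul]
      positivity
    set G := Real.log (1 / d)
    have hG : 1 ≤ G := by
      rw [Real.le_log_iff_exp_le (by positivity), le_div_iff₀ hdpos]
      nlinarith [Real.exp_one_lt_d9]
    have hlogt : -Real.log t ≤ Real.log K + 2 * G := by
      have := Real.log_le_log (by positivity) hdt
      rw [Real.log_mul (by positivity) ht0.ne', Real.log_pow] at this
      have hGd : G = -Real.log d := by simp only [G, one_div, Real.log_inv]
      push_cast at this
      linarith
    calc |Δ| * -Real.log t ≤ C / G * (Real.log K + 2 * G) :=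
          mul_le_mul (hΔ (by linarith)) hlogt (by linarith [Real.log_nonpos ht0.le ht1])
            (by positivity)
      _ = C * Real.log K / G + 2 * C := by field_simp
      _ ≤ C * Real.log K + 2 * C := by
          gcongr; exact div_le_self (by positivity) hG
      _ ≤ _ := by linarith
  · have hlogt : -Real.log t ≤ Real.log (16 * K) := by
      have := Real.log_le_log (by norm_num) (not_lt.mp hKt)
      rw [Real.log_mul (by positivity) ht0.ne', one_div, Real.log_inv] at this
      rw [Real.log_mul (by norm_num) (by positivity)]
      linarith
    calc |Δ| * -Real.log t ≤ B * Real.log (16 * K) :=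
          mul_le_mul hB hlogt (by linarith [Real.log_nonpos ht0.le ht1])
            ((abs_nonneg _).trans hB)
      _ ≤ _ := by linarith

theorem two_lt_one_sub_sq_mul_exp_add_one {d r : ℝ} (hd0 : 0 ≤ d) (hd1 : d < 1)
    (h : 1 / 2 * Real.log ((1 + d) / (1 - d)) < r) :
    2 < (1 - d ^ 2) * (Real.exp (2 * r) + 1) := by
  have hlt : (1 + d) / (1 - d) < Real.exp (2 * r) :=
    (Real.log_lt_iff_lt_exp (by apply div_pos <;> linarith)).mp (by linarith)
  rw [div_lt_iff₀ (by linarith)] at hlt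
  nlinarith [Real.exp_pos (2 * r)]

theorem rpow_le_exp_mul_rpow {t x y M : ℝ} (ht : 0 < t) (h : |(x - y) * Real.log t| ≤ M) :
    t ^ x ≤ Real.exp M * t ^ y := by
  rw [Real.rpow_def_of_pos ht, Real.rpow_def_of_pos ht, ← Real.exp_add, Real.exp_le_exp]
  linarith [le_abs_self ((x - y) * Real.log t)]

theorem exp_neg_mul_rpow_le_rpow {t x y M : ℝ} (ht : 0 < t) (h : |(x - y) * Real.log t| ≤ M) :
    Real.exp (-M) * t ^ y ≤ t ^ x := by
  rw [Real.rpow_def_of_pos ht, Real.rpow_def_of_pos ht, ← Real.exp_add, Real.exp_le_exp]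
  linarith [neg_abs_le ((x - y) * Real.log t)]

section BallGeometry

variable {n : ℕ}

theorem mem_Cball_iff {x : En n} : x ∈ Cball n ↔ ‖x‖ < 1 := by
  rw [Cball, mem_ball_zero_iff]

theorem pin_self (a : En n) : pin a a = (‖a‖ ^ 2 : ℝ) := by
  rw [pin, inner_self_eq_norm_sq_to_K]; norm_cast

theorem Pzproj_eq_smul (a z : En n) : Pzproj a z = (pin z a / (‖a‖ ^ 2 : ℝ)) • a := by
  unfold Pzproj
  split_ifs with ha
  · simp [ha]
  · rw [pin_self]

theorem norm_pin_le (z a : En n) : ‖pin z a‖ ≤ ‖a‖ * ‖z‖ := norm_inner_le_norm a z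

theorem phd_sq_mul_norm_one_sub_pin_sq {a z : En n} (ha : ‖a‖ ≤ 1) (h : pin z a ≠ 1) :
    phd a z ^ 2 * ‖1 - pin z a‖ ^ 2 =
      ‖a‖ ^ 2 - 2 * (pin z a).re + ‖pin z a‖ ^ 2 + (1 - ‖a‖ ^ 2) * ‖z‖ ^ 2 := by
  set c := Real.sqrt (1 - ‖a‖ ^ 2)
  have hσ : (1 - pin z a) • sigmaInv a z =
      (1 - (1 - (c : ℂ)) * (pin z a / (‖a‖ ^ 2 : ℝ))) • a - (c : ℂ) • z := by
    rw [sigmaInv, Pzproj_eq_smul, smul_smul, mul_one_div_cancel (sub_ne_zero.mpr h.symm), one_smul]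
    module
  rw [phd, ← mul_pow, mul_comm, ← norm_smul, hσ]
  rcases eq_or_ne a 0 with rfl | ha0
  · simp [pin, c]
  have hc : c ^ 2 = 1 - ‖a‖ ^ 2 := Real.sq_sqrt (by nlinarith [norm_nonneg a])
  have hA : ‖a‖ ^ 2 ≠ 0 := by positivity
  rw [@norm_sub_sq ℂ, norm_smul, norm_smul, inner_smul_left, inner_smul_right, ← pin,
    mul_pow, mul_pow, Complex.norm_real, ← Complex.normSq_eq_norm_sq, ← Complex.normSq_eq_norm_sq]
  simp only [Complex.normSq_apply, Complex.mul_re, Complex.mul_im, Complex.div_ofReal_re,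
    Complex.div_ofReal_im, Complex.sub_re, Complex.sub_im, Complex.one_re, Complex.one_im,
    Complex.ofReal_re, Complex.ofReal_im, Complex.conj_re, Complex.conj_im, map_sub, map_one,
    map_mul, map_div₀, Complex.conj_ofReal, RCLike.re_to_complex, Real.norm_eq_abs, sq_abs]
  field_simp
  linear_combination (‖a‖ ^ 2 * ‖z‖ ^ 2 - ((pin z a).re ^ 2 + (pin z a).im ^ 2)) * hc

theorem one_sub_phd_sq_mul_norm_one_sub_pin_sq {a z : En n} (ha : ‖a‖ ≤ 1)
    (h : pin z a ≠ 1) :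
    (1 - phd a z ^ 2) * ‖1 - pin z a‖ ^ 2 = (1 - ‖a‖ ^ 2) * (1 - ‖z‖ ^ 2) := by
  have hD : ‖1 - pin z a‖ ^ 2 = 1 - 2 * (pin z a).re + ‖pin z a‖ ^ 2 := by
    rw [@norm_sub_sq ℂ]; simp
  rw [sub_mul, phd_sq_mul_norm_one_sub_pin_sq ha h, hD]
  ring

theorem norm_sub_sq_eq_phd_sq_mul_add {a z : En n} (ha : ‖a‖ ≤ 1) (h : pin z a ≠ 1) :
    ‖z - a‖ ^ 2 = phd a z ^ 2 * ‖1 - pin z a‖ ^ 2 + (‖a‖ ^ 2 * ‖z‖ ^ 2 - ‖pin z a‖ ^ 2) := by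
  rw [phd_sq_mul_norm_one_sub_pin_sq ha h, @norm_sub_sq ℂ, inner_re_symm]
  simp only [pin, RCLike.re_to_complex]
  ring

theorem norm_pin_lt_one {a z : En n} (ha : ‖a‖ < 1) (hz : ‖z‖ < 1) : ‖pin z a‖ < 1 := by
  nlinarith [norm_pin_le z a, norm_nonneg a, norm_nonneg z]

theorem pin_ne_one {a z : En n} (ha : ‖a‖ < 1) (hz : ‖z‖ < 1) : pin z a ≠ 1 := fun h => by
  simpa [h] using norm_pin_lt_one ha hz

theorem one_sub_norm_le_norm_one_sub_pin {a z : En n} (ha : ‖a‖ ≤ 1) :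
    1 - ‖z‖ ≤ ‖1 - pin z a‖ := by
  have := norm_sub_norm_le (1 : ℂ) (pin z a)
  rw [norm_one] at this
  nlinarith [norm_pin_le z a, norm_nonneg z]

theorem phd_lt_one {a z : En n} (ha : ‖a‖ < 1) (hz : ‖z‖ < 1) : phd a z < 1 := by
  have hid := one_sub_phd_sq_mul_norm_one_sub_pin_sq ha.le (pin_ne_one ha hz)
  have hpos : 0 < (1 - ‖a‖ ^ 2) * (1 - ‖z‖ ^ 2) := by
    apply mul_pos <;> nlinarith [norm_nonneg a, norm_nonneg z]
  have hd0 : 0 ≤ phd a z := norm_nonneg _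
  have : 0 < 1 - phd a z ^ 2 := by
    by_contra! hle
    nlinarith [mul_nonpos_of_nonpos_of_nonneg hle (sq_nonneg ‖1 - pin z a‖)]
  nlinarith

theorem one_sub_phd_sq_mul_norm_one_sub_pin_le {a z : En n} (ha : ‖a‖ < 1) (hz : ‖z‖ < 1) :
    (1 - phd a z ^ 2) * ‖1 - pin z a‖ ≤ 2 * (1 - ‖a‖ ^ 2) := by
  have hid := one_sub_phd_sq_mul_norm_one_sub_pin_sq ha.le (pin_ne_one ha hz)
  have hD := one_sub_norm_le_norm_one_sub_pin (z := z) ha.le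
  have hD0 : 0 < ‖1 - pin z a‖ := by linarith
  have hA : 0 ≤ 1 - ‖a‖ ^ 2 := by nlinarith [norm_nonneg a]
  have hrad : 1 - ‖z‖ ^ 2 ≤ 2 * ‖1 - pin z a‖ := by nlinarith [norm_nonneg z]
  refine le_of_mul_le_mul_right ?_ hD0
  nlinarith [mul_le_mul_of_nonneg_left hrad hA]

theorem norm_sub_sq_mul_one_sub_phd_sq_le {a z : En n} (ha : ‖a‖ < 1) (hz : ‖z‖ < 1) :
    ‖z - a‖ ^ 2 * (1 - phd a z ^ 2) ≤ 8 * (1 - ‖a‖ ^ 2) := by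
  have hDd := one_sub_phd_sq_mul_norm_one_sub_pin_le ha hz
  have hα := norm_pin_lt_one ha hz
  set α := pin z a
  set D := ‖1 - α‖
  set d := phd a z
  have hD2 : D ≤ 2 := (norm_sub_le _ _).trans (by rw [norm_one]; linarith)
  have hDα : 1 - ‖α‖ ≤ D := by simpa using norm_sub_norm_le (1 : ℂ) α
  have hd0 : 0 ≤ d := norm_nonneg _
  have hd2 : 0 ≤ 1 - d ^ 2 := by nlinarith [phd_lt_one ha hz]
  have htan : ‖a‖ ^ 2 * ‖z‖ ^ 2 - ‖α‖ ^ 2 ≤ 2 * D := by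
    have : ‖a‖ ^ 2 * ‖z‖ ^ 2 ≤ 1 := by
      rw [← mul_pow]; exact pow_le_one₀ (by positivity) (by nlinarith [norm_nonneg a])
    nlinarith [norm_nonneg α]
  have hnormal : d ^ 2 * D ^ 2 * (1 - d ^ 2) ≤ 4 * (1 - ‖a‖ ^ 2) := by
    calc d ^ 2 * D ^ 2 * (1 - d ^ 2) = d ^ 2 * D * ((1 - d ^ 2) * D) := by ring
      _ ≤ 1 * 2 * (2 * (1 - ‖a‖ ^ 2)) := by gcongr; nlinarith
      _ = 4 * (1 - ‖a‖ ^ 2) := by ring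
  have htangential : (‖a‖ ^ 2 * ‖z‖ ^ 2 - ‖α‖ ^ 2) * (1 - d ^ 2) ≤ 4 * (1 - ‖a‖ ^ 2) := by
    nlinarith [mul_le_mul_of_nonneg_right htan hd2]
  rw [norm_sub_sq_eq_phd_sq_mul_add ha.le (pin_ne_one ha hz)]
  linarith

theorem norm_sub_sq_le_of_mem_Bball {a z : En n} {r : ℝ} (ha : a ∈ Cball n)
    (hz : z ∈ Bball a r) : ‖z - a‖ ^ 2 ≤ 4 * (Real.exp (2 * r) + 1) * (1 - ‖a‖ ^ 2) := by
  rw [mem_Cball_iff] at ha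
  obtain ⟨hz, hβ⟩ := hz
  rw [mem_Cball_iff] at hz
  have hd := two_lt_one_sub_sq_mul_exp_add_one (d := phd a z) (norm_nonneg _) (phd_lt_one ha hz)
    hβ
  have hbound := norm_sub_sq_mul_one_sub_phd_sq_le ha hz
  nlinarith [mul_le_mul_of_nonneg_right hbound (by positivity : 0 ≤ Real.exp (2 * r) + 1),
    mul_le_mul_of_nonneg_left hd.le (sq_nonneg ‖z - a‖)]

end BallGeometry

def LogHolderWith {n : ℕ} (C : ℝ) (p : En n → ℝ) : Prop :=
  ∀ z ∈ Cball n, ∀ w ∈ Cball n, dist z w < 1 / 2 → |p z - p w| ≤ C / Real.log (1 / dist z w)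

namespace LogHolderWith

variable {n : ℕ} {C : ℝ} {p : En n → ℝ}

theorem abs_sub_le_of_dist_le (hp : LogHolderWith C p) (hC : 0 ≤ C) {x y : En n}
    (hx : x ∈ Cball n) (hy : y ∈ Cball n) (hxy : dist x y ≤ 1 / 4) :
    |p x - p y| ≤ C / Real.log 4 := by
  rcases (dist_nonneg (x := x) (y := y)).eq_or_lt with h0 | h0
  · rw [dist_eq_zero.mp h0.symm, sub_self, abs_zero]
    positivity
  calc |p x - p y| ≤ C / Real.log (1 / dist x y) := hp x hx y hy (by linarith)
    _ ≤ C / Real.log 4 := div_le_div_of_nonneg_left hC (Real.log_pos (by norm_num))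
        (Real.log_le_log (by norm_num) ((le_one_div (by norm_num) h0).mpr hxy))

theorem abs_sub_le (hp : LogHolderWith C p) (hC : 0 ≤ C) {x y : En n}
    (hx : x ∈ Cball n) (hy : y ∈ Cball n) : |p x - p y| ≤ 8 * (C / Real.log 4) := by
  refine abs_sub_le_nat_mul_of_convex (convex_ball 0 1)
    (fun x hx y hy => hp.abs_sub_le_of_dist_le hC hx hy) 8 x hx y hy ?_
  rw [mem_Cball_iff] at hx hy
  calc dist x y ≤ ‖x‖ + ‖y‖ := dist_le_norm_add_norm x y
    _ ≤ 8 * (1 / 4) := by norm_num; linarith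

theorem exists_abs_sub_mul_abs_log_le (hp : LogHolderWith C p) (hC : 0 ≤ C) (r : ℝ) :
    ∃ M, ∀ a ∈ Cball n, ∀ x ∈ Bball a r, |p x - p a| * |Real.log (1 - ‖a‖ ^ 2)| ≤ M := by
  refine ⟨_, fun a ha x hx => abs_mul_abs_log_le_of_sq_le (K := 4 * (Real.exp (2 * r) + 1))
    (by nlinarith [Real.exp_pos (2 * r)]) ?_ ?_ dist_nonneg ?_ (hp.abs_sub_le hC hx.1 ha) hC
    (hp x hx.1 a ha)⟩
  · nlinarith [mem_Cball_iff.mp ha, norm_nonneg a]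
  · nlinarith [norm_nonneg a]
  · rw [dist_eq_norm]; exact norm_sub_sq_le_of_mem_Bball ha hx

end LogHolderWith

theorem stmt_3_general {n : ℕ} (r : ℝ) (p : En n → ℝ) (hp : LogHolder p) :
    ∃ c C : ℝ, 0 < c ∧ 0 < C ∧ ∀ a ∈ Cball n, ∀ z ∈ Bball a r, ∀ w ∈ Bball a r,
      c * (1 - ‖a‖ ^ 2) ^ (p w) ≤ (1 - ‖a‖ ^ 2) ^ (p z) ∧
      (1 - ‖a‖ ^ 2) ^ (p z) ≤ C * (1 - ‖a‖ ^ 2) ^ (p w) := by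
  obtain ⟨C, hC, hp⟩ := hp
  obtain ⟨M, hM⟩ := LogHolderWith.exists_abs_sub_mul_abs_log_le hp hC.le r
  refine ⟨Real.exp (-(2 * M)), Real.exp (2 * M), Real.exp_pos _, Real.exp_pos _, ?_⟩
  intro a ha z hz w hw
  have ht : 0 < 1 - ‖a‖ ^ 2 := by nlinarith [mem_Cball_iff.mp ha, norm_nonneg a]
  have hzw : |(p z - p w) * Real.log (1 - ‖a‖ ^ 2)| ≤ 2 * M := by
    rw [abs_mul]
    calc |p z - p w| * |Real.log (1 - ‖a‖ ^ 2)|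
        ≤ (|p z - p a| + |p w - p a|) * |Real.log (1 - ‖a‖ ^ 2)| := by
          gcongr; exact (abs_sub_le _ (p a) _).trans_eq (by rw [abs_sub_comm (p a)])
      _ ≤ 2 * M := by linarith [hM a ha z hz, hM a ha w hw]
  exact ⟨exp_neg_mul_rpow_le_rpow ht hzw, rpow_le_exp_mul_rpow ht hzw⟩

/-- comparability of `(1−|a|²)^{p(z)}` for `z` in a Bergman ball `B(a,r)`,
for log-Hölder `p`. -/
theorem stmt_3 {n : ℕ} (r : ℝ) (hr : 0 < r) (p : En n → ℝ) (hp : LogHolder p) :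
    ∃ c C : ℝ, 0 < c ∧ 0 < C ∧ ∀ a ∈ Cball n, ∀ z ∈ Bball a r, ∀ w ∈ Bball a r,
      c * (1 - ‖a‖ ^ 2) ^ (p w) ≤ (1 - ‖a‖ ^ 2) ^ (p z) ∧
      (1 - ‖a‖ ^ 2) ^ (p z) ≤ C * (1 - ‖a‖ ^ 2) ^ (p w) :=
  stmt_3_general r p hp
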